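/- arXiv:1903.02255 — 4 statements merged into one kernel-verified Lean document; each statement's English description precedes it below -/
import Mathlib

section
/- For any i, j ∈ {0, 1, ..., n}, the Krawtchouk polynomials satisfy the orthogonality relation: Σ_{u=0}^{n} K_i^{(n,q)}(u) · K_j^{(n,q)}(u) · (q-1)^u · C(n,u) = δ_{i,j} · q^n · (q-1)^i · C(n,i), where δ_{i,j} is the Kronecker delta. -/
open Finset

/-- Generalized binomial coefficient `C(z, j) = z(z-1)⋯(z-j+1)/j!` for real `z`. -/
noncomputable def realChoose (z : ℝ) (j : ℕ) : ℝ :=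
  (∏ k ∈ Finset.range j, (z - k)) / (Nat.factorial j)

/-- The Krawtchouk polynomial `K_i^{(n,q)}(z)`. -/
noncomputable def kraw (n q i : ℕ) (z : ℝ) : ℝ :=
  ∑ j ∈ Finset.range (i + 1),
    (-1 : ℝ) ^ j * ((q : ℝ) - 1) ^ (i - j) * (q : ℝ) ^ j *
      ((n - j).choose (n - i) : ℝ) * realChoose z j

/-! The identity `1 - x = (1 + (q - 1)x) - qx` shows that `K_i(u)` is the coefficient of `x^i` in
`(1 + (q - 1)x)^(n - u) (1 - x)^u` for `u ≤ n`. Multiplying these generating functions in `x` and `y`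
and summing with weights `(q - 1)^u C(n, u)` gives, by the binomial theorem,
`((1 + (q - 1)x)(1 + (q - 1)y) + (q - 1)(1 - x)(1 - y))^n = q^n (1 + (q - 1)xy)^n`,
whose coefficient of `x^i y^j` is `δ_ij q^n (q - 1)^i C(n, i)`. -/

open Polynomial

lemma realChoose_natCast (u j : ℕ) : realChoose u j = u.choose j := by
  rw [realChoose, ← descPochhammer_eval_eq_prod_range, Nat.cast_choose_eq_descPochhammer_div]

namespace Polynomial

lemma coeff_one_add_C_mul_X_pow {R : Type*} [CommSemiring R] (w : R) (m k : ℕ) :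
    ((1 + C w * X) ^ m).coeff k = m.choose k * w ^ k := by
  have : (1 + C w * X) ^ m = ((1 + X) ^ m).comp (C w * X) := by
    rw [pow_comp, add_comp, one_comp, X_comp]
  rw [this, comp_C_mul_X_coeff, coeff_one_add_X_pow]

variable {R : Type*} [CommRing R]

/-- `p(x) p(y)`, with `x` the inner and `y` the outer variable of `R[X][X]`. -/
noncomputable def selfProd (p : R[X]) : R[X][X] := C p * p.map C

lemma selfProd_mul (p r : R[X]) : selfProd (p * r) = selfProd p * selfProd r := by
  simp only [selfProd, map_mul, Polynomial.map_mul]; ring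

lemma selfProd_pow (p : R[X]) (m : ℕ) : selfProd (p ^ m) = selfProd p ^ m := by
  induction m with
  | zero => simp [selfProd]
  | succ m ih => rw [pow_succ, selfProd_mul, ih, pow_succ]

lemma coeff_coeff_selfProd (p : R[X]) (i j : ℕ) :
    ((selfProd p).coeff j).coeff i = p.coeff i * p.coeff j := by
  rw [selfProd, coeff_C_mul, coeff_map, coeff_mul_C]

lemma coeff_coeff_C_C_mul_one_add_pow (c t : R) (n i j : ℕ) :
    (((C (C c) * (1 + C (C t * X) * X)) ^ n).coeff j).coeff i =
      if i = j then c ^ n * n.choose i * t ^ i else 0 := by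
  rw [mul_pow, ← map_pow, ← map_pow, coeff_C_mul, coeff_one_add_C_mul_X_pow, mul_pow, ← C_pow,
    ← mul_assoc, ← C_eq_natCast, ← map_mul, ← mul_assoc, ← map_mul, coeff_C_mul_X_pow]
  split_ifs <;> simp_all [mul_assoc]

end Polynomial

section

variable {R : Type*} [CommRing R]

noncomputable def krawGen (n u : ℕ) (t : R) : R[X] := (1 + C t * X) ^ (n - u) * (1 - X) ^ u

lemma krawGen_eq_sum {n u : ℕ} (hu : u ≤ n) (t : R) :
    krawGen n u t = ∑ l ∈ Finset.range (n + 1),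
      C ((-(t + 1)) ^ l * u.choose l) * (X ^ l * (1 + C t * X) ^ (n - l)) := by
  have h1X : (1 - X : R[X]) = -(C (t + 1) * X) + (1 + C t * X) := by
    rw [map_add, map_one]; ring
  rw [krawGen, h1X, add_pow (-(C (t + 1) * X)), Finset.mul_sum, eq_comm,
    ← Finset.sum_subset (Finset.range_subset_range.2 (show u + 1 ≤ n + 1 by omega))
      (fun l _ hl => by rw [Nat.choose_eq_zero_of_lt (by simpa using hl)]; simp)]
  refine Finset.sum_congr rfl fun l hl => ?_
  have hexp : n - l = (n - u) + (u - l) := by grind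
  rw [hexp, pow_add, ← C_eq_natCast]
  simp only [map_mul, map_pow, map_neg]
  ring

lemma sum_selfProd_krawGen (n : ℕ) (t : R) :
    ∑ u ∈ Finset.range (n + 1), C (C (t ^ u * n.choose u)) * selfProd (krawGen n u t) =
      (C (C (t + 1)) * (1 + C (C t * X) * X)) ^ n := by
  have key : C (C t) * selfProd (1 - X) + selfProd (1 + C t * X) =
      C (C (t + 1)) * (1 + C (C t * X) * X) := by
    simp only [selfProd, Polynomial.map_sub, Polynomial.map_add, Polynomial.map_mul, map_add,
      map_sub, map_mul, map_one, Polynomial.map_one, map_X, map_C]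
    ring
  rw [← key, add_pow]
  refine Finset.sum_congr rfl fun u _ => ?_
  rw [krawGen, selfProd_mul, selfProd_pow, selfProd_pow, ← C_eq_natCast, ← C_eq_natCast]
  simp only [map_mul, map_pow, mul_pow]
  ring

end

lemma kraw_eq_coeff_krawGen {n i u : ℕ} (q : ℕ) (hi : i ≤ n) (hu : u ≤ n) :
    kraw n q i u = (krawGen n u ((q : ℝ) - 1)).coeff i := by
  rw [krawGen_eq_sum hu, finsetSum_coeff, kraw,
    ← Finset.sum_subset (Finset.range_subset_range.2 (show i + 1 ≤ n + 1 by omega))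
      (fun l _ hl => by
        rw [coeff_C_mul, coeff_X_pow_mul', if_neg (by simpa using hl), mul_zero])]
  refine Finset.sum_congr rfl fun l hl => ?_
  have hl : l ≤ i := by simpa [Nat.lt_succ_iff] using hl
  rw [coeff_C_mul, coeff_X_pow_mul', if_pos hl, coeff_one_add_C_mul_X_pow, realChoose_natCast,
    Nat.choose_symm_of_eq_add (show n - l = (n - i) + (i - l) by omega), sub_add_cancel]
  ring

theorem krawtchouk_orthogonality_general (n q : ℕ)
    (i j : ℕ) (hi : i ≤ n) (hj : j ≤ n) :
    ∑ u ∈ Finset.range (n + 1),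
        kraw n q i u * kraw n q j u * ((q : ℝ) - 1) ^ u * (n.choose u : ℝ) =
      (if i = j then 1 else 0) * (q : ℝ) ^ n * ((q : ℝ) - 1) ^ i * (n.choose i : ℝ) := by
  set t : ℝ := (q : ℝ) - 1
  have hterm : ∀ u ∈ Finset.range (n + 1),
      kraw n q i u * kraw n q j u * t ^ u * (n.choose u : ℝ) =
        ((C (C (t ^ u * n.choose u)) * selfProd (krawGen n u t)).coeff j).coeff i := by
    intro u hu
    have hu : u ≤ n := by simpa [Nat.lt_succ_iff] using hu
    rw [coeff_C_mul, coeff_C_mul, coeff_coeff_selfProd, kraw_eq_coeff_krawGen q hi hu,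
      kraw_eq_coeff_krawGen q hj hu]
    ring
  rw [Finset.sum_congr rfl hterm, ← finsetSum_coeff, ← finsetSum_coeff, sum_selfProd_krawGen,
    coeff_coeff_C_C_mul_one_add_pow, sub_add_cancel]
  split_ifs <;> ring

theorem krawtchouk_orthogonality (n q : ℕ) (hn : 1 ≤ n) (hq : 2 ≤ q)
    (i j : ℕ) (hi : i ≤ n) (hj : j ≤ n) :
    ∑ u ∈ Finset.range (n + 1),
        kraw n q i u * kraw n q j u * ((q : ℝ) - 1) ^ u * (n.choose u : ℝ) =
      (if i = j then 1 else 0) * (q : ℝ) ^ n * ((q : ℝ) - 1) ^ i * (n.choose i : ℝ) :=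
  krawtchouk_orthogonality_general n q i j hi hj
end

section
/- The Christoffel-Darboux formula holds: for any i ∈ {0,1,...,n} and real z, w, we have (w - z)·T_i^{n,q}(z,w) = (i+1)/(q·(q-1)^i·C(n,i)) · [K_{i+1}^{(n,q)}(z)·K_i^{(n,q)}(w) - K_{i+1}^{(n,q)}(w)·K_i^{(n,q)}(z)]. -/
open Finset
/-- The kernel `T_i^{n,q}(z,w)`. -/
noncomputable def krawKernel (n q i : ℕ) (z w : ℝ) : ℝ :=
  ∑ j ∈ Finset.range (i + 1),
    kraw n q j z * kraw n q j w / (((q : ℝ) - 1) ^ j * (n.choose j : ℝ))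


lemma mul_realChoose (z : ℝ) (j : ℕ) :
    z * realChoose z j = (j + 1) * realChoose z (j + 1) + j * realChoose z j := by
  have : ((j.factorial : ℕ) : ℝ) ≠ 0 := by positivity
  simp only [realChoose, prod_range_succ, Nat.factorial_succ, Nat.cast_mul, Nat.cast_succ]
  field_simp
  ring

lemma mul_sum_realChoose (f : ℕ → ℝ) (N : ℕ) (z : ℝ) :
    z * ∑ j ∈ range (N + 1), f j * realChoose z j =
      ∑ j ∈ range (N + 1), j * (f (j - 1) + f j) * realChoose z j
        + (N + 1) * f N * realChoose z (N + 1) := by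
  have hshift := sum_range_succ' (fun j : ℕ => j * f (j - 1) * realChoose z j) (N + 1)
  simp only [Nat.add_sub_cancel, Nat.cast_zero, zero_mul, add_zero, Nat.cast_succ] at hshift
  rw [sum_range_succ, Nat.add_sub_cancel, Nat.cast_succ] at hshift
  calc z * ∑ j ∈ range (N + 1), f j * realChoose z j
      = ∑ j ∈ range (N + 1), (j + 1) * f j * realChoose z (j + 1)
          + ∑ j ∈ range (N + 1), j * f j * realChoose z j := by
        rw [mul_sum, ← sum_add_distrib]
        exact sum_congr rfl fun j _ => by linear_combination f j * mul_realChoose z j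
    _ = _ := by
        rw [← hshift]
        simp only [mul_add, add_mul, sum_add_distrib]
        ring

noncomputable def krawCoeff (n q i j : ℕ) : ℝ :=
  (-1 : ℝ) ^ j * ((q : ℝ) - 1) ^ (i - j) * (q : ℝ) ^ j * ((n - j).choose (n - i) : ℝ)

lemma kraw_eq_sum_krawCoeff (n q i : ℕ) (z : ℝ) :
    kraw n q i z = ∑ j ∈ range (i + 1), krawCoeff n q i j * realChoose z j := rfl

lemma krawCoeff_self (n q i : ℕ) : krawCoeff n q i i = (-1) ^ i * q ^ i := by
  simp [krawCoeff]

lemma krawCoeff_pred_self {n q m : ℕ} (hm : 1 ≤ m) (hmn : m ≤ n) :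
    krawCoeff n q (m - 1) m = 0 := by
  rw [krawCoeff, Nat.choose_eq_zero_of_lt (by omega), Nat.cast_zero, mul_zero]

lemma krawCoeff_recurrence_reduced (q : ℝ) (j e d : ℕ) :
    (j + e + 1) * ((q - 1) * (e + d).choose (d - 1)) - j * (q - 1) * (e + d + 1).choose d
      + q * j * (e + d).choose d + (d + 1) * (e + d).choose (d + 1)
      = ((q - 1) * d + j + e + if d = 0 then (j + e + d + 1) * (q - 1) else 0)
          * (e + d).choose d := by
  rcases d with _ | d
  · simp only [add_zero, zero_add, zero_tsub, if_true, Nat.choose_zero_right,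
      Nat.choose_one_right]
    push_cast
    ring
  have h_pascal : ((e + (d + 1) + 1).choose (d + 1) : ℝ)
      = (e + (d + 1)).choose d + (e + (d + 1)).choose (d + 1) := by
    exact_mod_cast Nat.choose_succ_succ (e + (d + 1)) d
  have h_absorb : ((e + (d + 1)).choose (d + 1) : ℝ) * (d + 1)
      = (e + (d + 1)).choose d * (e + 1) := by
    have := Nat.choose_succ_right_eq (e + (d + 1)) d
    rw [show e + (d + 1) - d = e + 1 by omega] at this
    exact_mod_cast this
  have h_absorb' : ((e + (d + 1)).choose (d + 1 + 1) : ℝ) * (d + 1 + 1)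
      = (e + (d + 1)).choose (d + 1) * e := by
    have := Nat.choose_succ_right_eq (e + (d + 1)) (d + 1)
    rw [show e + (d + 1) - (d + 1) = e by omega] at this
    exact_mod_cast this
  rw [if_neg d.succ_ne_zero, Nat.add_sub_cancel]
  push_cast
  linear_combination (-j * (q - 1)) * h_pascal - (q - 1) * h_absorb + h_absorb'

lemma krawCoeff_recurrence (q : ℕ) {n m j : ℕ} (hm : 1 ≤ m) (hmn : m ≤ n) (hj : j ≤ m) :
    (m + 1) * krawCoeff n q (m + 1) j + q * j * (krawCoeff n q m (j - 1) + krawCoeff n q m j)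
      + (q - 1) * (n - m + 1) * krawCoeff n q (m - 1) j
      = ((q - 1) * (n - m) + m + if m = n then ((n : ℝ) + 1) * (q - 1) else 0)
          * krawCoeff n q m j := by
  obtain ⟨e, rfl⟩ : ∃ e, m = j + e := ⟨m - j, by omega⟩
  obtain ⟨d, rfl⟩ : ∃ d, n = j + e + d := ⟨n - (j + e), by omega⟩
  have h_succ : krawCoeff (j + e + d) q (j + e + 1) j
      = (-1) ^ j * q ^ j * (q - 1) ^ e * ((q - 1) * (e + d).choose (d - 1)) := by
    rw [krawCoeff, show j + e + 1 - j = e + 1 by omega, show j + e + d - j = e + d by omega,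
      show j + e + d - (j + e + 1) = d - 1 by omega]
    ring
  have h_self : krawCoeff (j + e + d) q (j + e) j
      = (-1) ^ j * q ^ j * (q - 1) ^ e * (e + d).choose d := by
    rw [krawCoeff, show j + e - j = e by omega, show j + e + d - j = e + d by omega,
      show j + e + d - (j + e) = d by omega]
    ring
  have h_left : q * j * krawCoeff (j + e + d) q (j + e) (j - 1)
      = (-1) ^ j * q ^ j * (q - 1) ^ e * (-(j * (q - 1) * (e + d + 1).choose d)) := by
    rcases j with _ | j
    · simp
    rw [krawCoeff, show j + 1 + e - (j + 1 - 1) = e + 1 by omega,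
      show j + 1 + e + d - (j + 1 - 1) = e + d + 1 by omega,
      show j + 1 + e + d - (j + 1 + e) = d by omega, Nat.add_sub_cancel]
    push_cast
    ring
  have h_pred : (q - 1) * krawCoeff (j + e + d) q (j + e - 1) j
      = (-1) ^ j * q ^ j * (q - 1) ^ e * (e + d).choose (d + 1) := by
    rcases e with _ | e
    · rw [krawCoeff, show j + 0 + d - (j + 0 - 1) = d + 1 by omega, Nat.add_zero,
        Nat.choose_eq_zero_of_lt (by omega : j + d - j < d + 1)]
      simp
    rw [krawCoeff, show j + (e + 1) - 1 - j = e by omega,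
      show j + (e + 1) + d - j = e + 1 + d by omega,
      show j + (e + 1) + d - (j + (e + 1) - 1) = d + 1 by omega]
    ring
  simp only [Nat.left_eq_add]
  linear_combination (norm := (push_cast; ring))
    ((j + e : ℕ) + 1 : ℝ) * h_succ + h_left + (d + 1) * h_pred
      + (q * j - ((q - 1) * d + (j + e : ℕ)
        + if d = 0 then ((j + e + d : ℕ) + 1) * (q - 1) else 0)) * h_self
      + (-1) ^ j * q ^ j * (q - 1) ^ e * krawCoeff_recurrence_reduced q j e d

/-- The correction at `m = n` comes from the junk value `kraw n q (n + 1)`: there `n - (n + 1)`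
truncates to `0`, which adds `(q - 1) * kraw n q n` to the true `K_{n+1}`. -/
lemma kraw_recurrence (q : ℕ) {n m : ℕ} (hm : 1 ≤ m) (hmn : m ≤ n) (z : ℝ) :
    (m + 1) * kraw n q (m + 1) z + q * z * kraw n q m z
      + (q - 1) * (n - m + 1) * kraw n q (m - 1) z
      = ((q - 1) * (n - m) + m + if m = n then ((n : ℝ) + 1) * (q - 1) else 0)
          * kraw n q m z := by
  have h_succ : kraw n q (m + 1) z
      = ∑ j ∈ range (m + 1), krawCoeff n q (m + 1) j * realChoose z j
        + krawCoeff n q (m + 1) (m + 1) * realChoose z (m + 1) := sum_range_succ _ _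
  have h_pred : kraw n q (m - 1) z
      = ∑ j ∈ range (m + 1), krawCoeff n q (m - 1) j * realChoose z j := by
    rw [sum_range_succ, krawCoeff_pred_self hm hmn, zero_mul, add_zero, kraw_eq_sum_krawCoeff,
      Nat.sub_add_cancel hm]
  have h_top : (m + 1) * krawCoeff n q (m + 1) (m + 1) + q * ((m + 1) * krawCoeff n q m m) = 0 := by
    rw [krawCoeff_self, krawCoeff_self]
    ring
  have h_coeffs : ∑ j ∈ range (m + 1), ((m + 1) * (krawCoeff n q (m + 1) j * realChoose z j)
      + q * (j * (krawCoeff n q m (j - 1) + krawCoeff n q m j) * realChoose z j)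
      + (q - 1) * (n - m + 1) * (krawCoeff n q (m - 1) j * realChoose z j))
      = ∑ j ∈ range (m + 1),
          ((q - 1) * (n - m) + m + if m = n then ((n : ℝ) + 1) * (q - 1) else 0)
            * (krawCoeff n q m j * realChoose z j) :=
    sum_congr rfl fun j hj => by
      linear_combination
        realChoose z j * krawCoeff_recurrence q hm hmn (Nat.lt_succ_iff.mp (mem_range.mp hj))
  rw [h_succ, mul_assoc (q : ℝ) z, kraw_eq_sum_krawCoeff n q m, mul_sum_realChoose, h_pred]
  simp only [mul_add, mul_sum, sum_add_distrib] at h_coeffs ⊢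
  linear_combination h_coeffs + realChoose z (m + 1) * h_top

lemma kraw_zero (n q : ℕ) (z : ℝ) : kraw n q 0 z = 1 := by
  simp [kraw, realChoose]

lemma kraw_one (n q : ℕ) (z : ℝ) : kraw n q 1 z = (q - 1) * n.choose (n - 1) - q * z := by
  simp [kraw, realChoose, sum_range_succ, sub_eq_add_neg, mul_comm]

noncomputable def krawWronskian (n q i : ℕ) (z w : ℝ) : ℝ :=
  kraw n q (i + 1) z * kraw n q i w - kraw n q (i + 1) w * kraw n q i z

lemma krawWronskian_zero (n q : ℕ) (z w : ℝ) : krawWronskian n q 0 z w = q * (w - z) := by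
  rw [krawWronskian, kraw_one, kraw_one, kraw_zero, kraw_zero]
  ring

lemma krawWronskian_succ (q : ℕ) {n i : ℕ} (hi : i + 1 ≤ n) (z w : ℝ) :
    (i + 2) * krawWronskian n q (i + 1) z w
      = q * (w - z) * (kraw n q (i + 1) z * kraw n q (i + 1) w)
        + (q - 1) * (n - i) * krawWronskian n q i z w := by
  have hz := kraw_recurrence q (Nat.le_add_left 1 i) hi z
  have hw := kraw_recurrence q (Nat.le_add_left 1 i) hi w
  simp only [Nat.add_sub_cancel, Nat.cast_add, Nat.cast_one] at hz hw
  unfold krawWronskian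
  linear_combination kraw n q (i + 1) w * hz - kraw n q (i + 1) z * hw

lemma cast_choose_succ_right_eq {n i : ℕ} (hi : i ≤ n) :
    (n.choose (i + 1) : ℝ) * (i + 1) = n.choose i * (n - i) := by
  have h := congrArg (Nat.cast : ℕ → ℝ) (Nat.choose_succ_right_eq n i)
  push_cast [Nat.cast_sub hi] at h
  exact h

theorem krawtchouk_christoffel_darboux_general (n q : ℕ) (hq : 2 ≤ q)
    (i : ℕ) (hi : i ≤ n) (z w : ℝ) :
    (w - z) * krawKernel n q i z w =
      ((i : ℝ) + 1) / ((q : ℝ) * ((q : ℝ) - 1) ^ i * (n.choose i : ℝ)) *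
        (kraw n q (i + 1) z * kraw n q i w - kraw n q (i + 1) w * kraw n q i z) := by
  have hq1 : (1 : ℝ) < q := by exact_mod_cast hq
  have hq0 : (q : ℝ) ≠ 0 := (zero_lt_one.trans hq1).ne'
  have hq1' : (q : ℝ) - 1 ≠ 0 := (sub_pos.mpr hq1).ne'
  change _ = _ * krawWronskian n q i z w
  induction i with
  | zero =>
    rw [krawWronskian_zero]
    simp [krawKernel, kraw_zero, hq0]
  | succ i ih =>
    have hCi : (n.choose i : ℝ) ≠ 0 := Nat.cast_ne_zero.mpr (Nat.choose_pos (by omega)).ne'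
    have hCi' : (n.choose (i + 1) : ℝ) ≠ 0 := Nat.cast_ne_zero.mpr (Nat.choose_pos hi).ne'
    rw [krawKernel, sum_range_succ, ← krawKernel, mul_add, ih (by omega)]
    have hW := krawWronskian_succ q hi z w
    have hC := cast_choose_succ_right_eq (by omega : i ≤ n)
    field_simp
    push_cast
    linear_combination ((q : ℝ) - 1) ^ (i + 1) * krawWronskian n q i z w * hC
      - ((q : ℝ) - 1) ^ i * n.choose i * hW

theorem krawtchouk_christoffel_darboux (n q : ℕ) (hn : 1 ≤ n) (hq : 2 ≤ q)
    (i : ℕ) (hi : i ≤ n) (z w : ℝ) :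
    (w - z) * krawKernel n q i z w =
      ((i : ℝ) + 1) / ((q : ℝ) * ((q : ℝ) - 1) ^ i * (n.choose i : ℝ)) *
        (kraw n q (i + 1) z * kraw n q i w - kraw n q (i + 1) w * kraw n q i z) :=
  krawtchouk_christoffel_darboux_general n q hq i hi z w
end

section
/- Plotkin Bound: if C ⊆ F_q^n is a code with minimum distance d satisfying qd > (q-1)n, then |C| ≤ qd / (qd - (q-1)n). -/
open Finset

/-- The distance distribution `B_i` of a code `C ⊆ F_q^n`. -/
noncomputable def distDistrib {n q : ℕ} (C : Finset (Fin n → Fin q)) (i : ℕ) : ℝ :=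
  (((C ×ˢ C).filter (fun p => hammingDist p.1 p.2 = i)).card : ℝ) / (C.card : ℝ)

/-- The dual distance distribution (MacWilliams transform) `B'_i` of a code. -/
noncomputable def dualDistDistrib {n q : ℕ} (C : Finset (Fin n → Fin q)) (i : ℕ) : ℝ :=
  (∑ j ∈ Finset.range (n + 1), distDistrib C j * kraw n q i j) / (C.card : ℝ)

/-!
Double counting `∑_{x, y ∈ C} d(x, y)`. Every ordered pair of distinct codewords contributes at
least `d`, giving `M (M - 1) d` from below. Coordinatewise, the pairs agreeing at a fixed position
are counted by `∑_a m_a²`, where `m_a` is the number of codewords with symbol `a` there; by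
Cauchy–Schwarz this is at least `M² / q`, so each position contributes at most `(1 - 1/q) M²`.
Hence `q M (M - 1) d ≤ (q - 1) n M²`, which rearranges to the bound.
-/

section Collisions

variable {α β : Type*} [DecidableEq β] [Fintype β] (s : Finset α) (g : α → β)

theorem card_filter_apply_eq_apply_eq_sum_sq :
    #{p ∈ s ×ˢ s | g p.1 = g p.2} = ∑ b, #{a ∈ s | g a = b} ^ 2 := by
  rw [card_eq_sum_card_fiberwise (f := fun p => g p.1) (t := univ) fun _ _ => mem_univ _]
  refine sum_congr rfl fun b _ => ?_
  rw [sq, ← card_product]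
  congr 1
  ext ⟨x, y⟩
  simp only [mem_filter, mem_product]
  constructor
  · rintro ⟨⟨⟨hx, hy⟩, hxy⟩, rfl⟩
    exact ⟨⟨hx, rfl⟩, hy, hxy.symm⟩
  · rintro ⟨⟨hx, rfl⟩, hy, hyx⟩
    exact ⟨⟨⟨hx, hy⟩, hyx.symm⟩, rfl⟩

theorem sq_card_le_card_mul_card_filter_apply_eq :
    #s ^ 2 ≤ Fintype.card β * #{p ∈ s ×ˢ s | g p.1 = g p.2} := by
  rw [card_filter_apply_eq_apply_eq_sum_sq, card_eq_sum_card_fiberwise (f := g) (t := univ)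
    fun _ _ => mem_univ _, ← card_univ]
  exact sq_sum_le_card_mul_sum_sq

theorem card_mul_card_filter_apply_ne_le :
    Fintype.card β * #{p ∈ s ×ˢ s | g p.1 ≠ g p.2} ≤ (Fintype.card β - 1) * #s ^ 2 := by
  have hsplit := card_filter_add_card_filter_not (s := s ×ˢ s) (fun p => g p.1 = g p.2)
  rw [card_product, ← sq] at hsplit
  have hcs := sq_card_le_card_mul_card_filter_apply_eq s g
  rw [← hsplit] at hcs ⊢
  simp only [Nat.sub_one_mul, mul_add, ne_eq]
  omega

end Collisions

section Hamming

variable {ι : Type*} [Fintype ι]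

theorem sum_hammingDist_eq_sum_card_filter_apply_ne {β : ι → Type*} [∀ i, DecidableEq (β i)]
    (s : Finset ((∀ i, β i) × ∀ i, β i)) :
    ∑ p ∈ s, hammingDist p.1 p.2 = ∑ i, #{p ∈ s | p.1 i ≠ p.2 i} := by
  simp only [hammingDist, card_filter]
  exact sum_comm

theorem card_mul_sum_hammingDist_le {β : Type*} [DecidableEq β] [Fintype β]
    (s : Finset (ι → β)) :
    Fintype.card β * ∑ p ∈ s ×ˢ s, hammingDist p.1 p.2 ≤
      (Fintype.card β - 1) * Fintype.card ι * #s ^ 2 := by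
  rw [sum_hammingDist_eq_sum_card_filter_apply_ne, mul_sum]
  calc ∑ i, Fintype.card β * #{p ∈ s ×ˢ s | p.1 i ≠ p.2 i}
      ≤ ∑ _i : ι, (Fintype.card β - 1) * #s ^ 2 :=
        sum_le_sum fun i _ => card_mul_card_filter_apply_ne_le s (· i)
    _ = (Fintype.card β - 1) * Fintype.card ι * #s ^ 2 := by
        rw [sum_const, card_univ, smul_eq_mul]; ring

theorem card_mul_pred_mul_le_sum_hammingDist {β : ι → Type*} [∀ i, DecidableEq (β i)]
    {s : Finset (∀ i, β i)} {d : ℕ} (hd : ∀ x ∈ s, ∀ y ∈ s, x ≠ y → d ≤ hammingDist x y) :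
    #s * (#s - 1) * d ≤ ∑ p ∈ s ×ˢ s, hammingDist p.1 p.2 :=
  calc #s * (#s - 1) * d = ∑ _p ∈ s.offDiag, d := by
        rw [sum_const, offDiag_card, smul_eq_mul, Nat.mul_sub_one]
    _ ≤ ∑ p ∈ s.offDiag, hammingDist p.1 p.2 := sum_le_sum fun p hp => by
        obtain ⟨hx, hy, hxy⟩ := mem_offDiag.mp hp
        exact hd _ hx _ hy hxy
    _ ≤ ∑ p ∈ s ×ˢ s, hammingDist p.1 p.2 :=
        sum_le_sum_of_subset fun p hp => by
          obtain ⟨hx, hy, -⟩ := mem_offDiag.mp hp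
          exact mem_product.mpr ⟨hx, hy⟩

end Hamming

theorem mul_sub_le_of_mul_mul_pred_le {a b m : ℕ} (h : a * (m * (m - 1)) ≤ b * m ^ 2) :
    m * (a - b) ≤ a := by
  rcases Nat.eq_zero_or_pos m with rfl | hm
  · simp
  have hcancel : a * (m - 1) ≤ b * m := by
    refine Nat.le_of_mul_le_mul_left ?_ hm
    calc m * (a * (m - 1)) = a * (m * (m - 1)) := by ring
      _ ≤ b * m ^ 2 := h
      _ = m * (b * m) := by ring
  rw [Nat.mul_sub_one, Nat.sub_le_iff_le_add] at hcancel
  rw [Nat.mul_sub, Nat.sub_le_iff_le_add]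
  linarith

theorem plotkin_bound_general (n q d : ℕ)
    (C : Finset (Fin n → Fin q))
    -- `d` is the minimum distance of `C`
    (hd_le : ∀ x ∈ C, ∀ y ∈ C, x ≠ y → d ≤ hammingDist x y)
    (hplotkin : (q - 1) * n < q * d) :
    (C.card : ℝ) ≤ ((q : ℝ) * d) / ((q : ℝ) * d - ((q : ℝ) - 1) * n) := by
  have hq : 1 ≤ q := Nat.pos_of_ne_zero (by rintro rfl; simp at hplotkin)
  have hcount : q * d * (#C * (#C - 1)) ≤ (q - 1) * n * #C ^ 2 := by
    have hsum := card_mul_sum_hammingDist_le C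
    simp only [Fintype.card_fin] at hsum
    calc q * d * (#C * (#C - 1)) = q * (#C * (#C - 1) * d) := by ring
      _ ≤ q * ∑ p ∈ C ×ˢ C, hammingDist p.1 p.2 :=
          Nat.mul_le_mul_left q (card_mul_pred_mul_le_sum_hammingDist hd_le)
      _ ≤ (q - 1) * n * #C ^ 2 := hsum
  have hcast : ((q * d - (q - 1) * n : ℕ) : ℝ) = (q : ℝ) * d - ((q : ℝ) - 1) * n := by
    push_cast [Nat.cast_sub hplotkin.le, Nat.cast_sub hq]
    ring
  have hpos : 0 < (q : ℝ) * d - ((q : ℝ) - 1) * n := by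
    rw [← hcast]
    exact_mod_cast Nat.sub_pos_of_lt hplotkin
  rw [le_div_iff₀ hpos, ← hcast]
  exact_mod_cast mul_sub_le_of_mul_mul_pred_le hcount

theorem plotkin_bound (n q d : ℕ) (hn : 1 ≤ n) (hq : 2 ≤ q)
    (C : Finset (Fin n → Fin q)) (hC : 2 ≤ C.card)
    -- `d` is the minimum distance of `C`
    (hd_le : ∀ x ∈ C, ∀ y ∈ C, x ≠ y → d ≤ hammingDist x y)
    (hd_ex : ∃ x ∈ C, ∃ y ∈ C, x ≠ y ∧ hammingDist x y = d)
    (hplotkin : (q - 1) * n < q * d) :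
    (C.card : ℝ) ≤ ((q : ℝ) * d) / ((q : ℝ) * d - ((q : ℝ) - 1) * n) :=
  plotkin_bound_general n q d C hd_le hplotkin
end

section
/- LP bound for spherical codes: let n ≥ 2, s ∈ [-1,1), and f a real polynomial such that f(t) ≤ 0 for all t ∈ [-1,s] and whose Gegenbauer expansion f = Σ f_i P_i^{(n)} satisfies f_0 > 0 and f_i ≥ 0 for all i ≥ 1. Then every finite set C ⊂ S^{n-1} with ⟨x,y⟩ ≤ s for all distinct x,y ∈ C has |C| ≤ f(1)/f_0. -/
open Finset

/-- The Gegenbauer polynomials `P_i^{(n)}(t)` normalized by `P_i^{(n)}(1) = 1`,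
defined by the recurrence `(i+n-2) P_{i+1} = (2i+n-2) t P_i - i P_{i-1}`. -/
noncomputable def geg (n : ℕ) : ℕ → ℝ → ℝ
  | 0, _ => 1
  | 1, t => t
  | (i + 2), t =>
      ((2 * ((i : ℝ) + 1) + (n : ℝ) - 2) * t * geg n (i + 1) t
        - ((i : ℝ) + 1) * geg n i t) / (((i : ℝ) + 1) + (n : ℝ) - 2)

open scoped RealInnerProductSpace

/-!
Delsarte's argument: in `S = ∑_{x,y ∈ C} f ⟪x, y⟫` the off-diagonal terms are `≤ 0`, so
`S ≤ |C| f(1)`; expanding `f` in Gegenbauer polynomials, every `∑_{x,y} P_i ⟪x, y⟫` is `≥ 0`, so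
`S ≥ f₀ |C|²`.

Positive-definiteness of `P_k` is proved algebraically, with the Fischer inner product
`⟨p, q⟩ = ∑ α! p_α q_α` on `ℝ[X₁, …, Xₙ]`, for which multiplication by `Xₐ` is adjoint to `∂ₐ`.
The homogenised Gegenbauer polynomial `Z_x(y) = ‖y‖ᵏ P_k(⟨x, y⟩ / ‖y‖)` is harmonic, and
`⟨Z_x, q⟩ = κ q(x)` with `κ > 0` for every harmonic `q` homogeneous of degree `k`: by induction on
`k`, since `⟨⟨x, X⟩ p, q⟩ = ⟨p, ∂_x q⟩` and `⟨‖X‖² p, q⟩ = ⟨p, Δq⟩ = 0`. For `q = ∑_{y ∈ C} Z_y`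
this gives `∑_{x,y} P_k ⟪x, y⟫ = ∑_x q(x) = ⟨q, q⟩ / κ ≥ 0`.
-/

namespace MvPolynomial

variable {σ R : Type*} [CommRing R]

lemma pderiv_pderiv_comm (a b : σ) (p : MvPolynomial σ R) :
    pderiv a (pderiv b p) = pderiv b (pderiv a p) := by
  have h : ⁅pderiv a, pderiv b⁆ = (0 : Derivation R (MvPolynomial σ R) (MvPolynomial σ R)) :=
    derivation_ext fun i => by
      classical
      rw [Derivation.commutator_apply]
      simp [Pi.single_apply, apply_ite]
  rw [← sub_eq_zero, ← Derivation.commutator_apply, h, Derivation.zero_apply]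

variable [Fintype σ]

noncomputable def factorialWeight (α : σ →₀ ℕ) : ℕ := ∏ a, (α a).factorial

lemma factorialWeight_add_single [DecidableEq σ] (β : σ →₀ ℕ) (a : σ) :
    factorialWeight (β + Finsupp.single a 1) = factorialWeight β * (β a + 1) := by
  simp only [factorialWeight, ← Finset.mul_prod_erase univ _ (mem_univ a)]
  rw [Finset.prod_congr rfl fun b hb => by
    rw [Finsupp.add_apply, Finsupp.single_eq_of_ne (Finset.ne_of_mem_erase hb), add_zero]]
  simp [Nat.factorial_succ]
  ring

lemma sum_support_factorialWeight_eq (p q : MvPolynomial σ R) {s : Finset (σ →₀ ℕ)}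
    (hs : p.support ⊆ s) :
    ∑ α ∈ p.support, (factorialWeight α : R) * p.coeff α * q.coeff α =
      ∑ α ∈ s, (factorialWeight α : R) * p.coeff α * q.coeff α :=
  Finset.sum_subset hs fun α _ hα => by rw [notMem_support_iff.mp hα]; ring

noncomputable def fischer : LinearMap.BilinForm R (MvPolynomial σ R) :=
  LinearMap.mk₂ R
    (fun p q : MvPolynomial σ R => ∑ α ∈ p.support, (factorialWeight α : R) * p.coeff α * q.coeff α)
    (fun p₁ p₂ q => by
      classical
      rw [sum_support_factorialWeight_eq _ q support_add,
        sum_support_factorialWeight_eq p₁ q subset_union_left,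
        sum_support_factorialWeight_eq p₂ q subset_union_right, ← sum_add_distrib]
      exact Finset.sum_congr rfl fun _ _ => by rw [coeff_add]; ring)
    (fun c p q => by
      rw [sum_support_factorialWeight_eq _ q support_smul, smul_eq_mul, Finset.mul_sum]
      exact Finset.sum_congr rfl fun _ _ => by rw [coeff_smul, smul_eq_mul]; ring)
    (fun p q₁ q₂ => by simp only [coeff_add, mul_add, sum_add_distrib])
    (fun c p q => by
      rw [smul_eq_mul, Finset.mul_sum]
      exact Finset.sum_congr rfl fun _ _ => by rw [coeff_smul, smul_eq_mul]; ring)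

lemma fischer_apply_of_subset {p q : MvPolynomial σ R} {s : Finset (σ →₀ ℕ)}
    (hs : p.support ⊆ s) :
    fischer p q = ∑ α ∈ s, (factorialWeight α : R) * p.coeff α * q.coeff α :=
  sum_support_factorialWeight_eq p q hs

lemma fischer_monomial_left (β : σ →₀ ℕ) (r : R) (q : MvPolynomial σ R) :
    fischer (monomial β r) q = factorialWeight β * r * q.coeff β := by
  classical
  rw [fischer_apply_of_subset (support_monomial_subset (a := r)), Finset.sum_singleton,
    coeff_monomial, if_pos rfl]

lemma fischer_one_left (q : MvPolynomial σ R) : fischer 1 q = q.coeff 0 := by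
  rw [← C_1, C_apply, fischer_monomial_left]
  simp [factorialWeight]

lemma fischer_self_nonneg {K : Type*} [CommRing K] [LinearOrder K] [IsStrictOrderedRing K]
    (p : MvPolynomial σ K) : 0 ≤ fischer p p :=
  Finset.sum_nonneg fun α _ => by
    rw [mul_assoc]; exact mul_nonneg (Nat.cast_nonneg _) (mul_self_nonneg _)

lemma fischer_X_mul (a : σ) (p q : MvPolynomial σ R) :
    fischer (X a * p) q = fischer p (pderiv a q) := by
  classical
  induction p using MvPolynomial.induction_on' with
  | monomial β r =>
    rw [X, monomial_mul, one_mul, add_comm, fischer_monomial_left, fischer_monomial_left,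
      coeff_pderiv, factorialWeight_add_single]
    push_cast
    ring
  | add p₁ p₂ h₁ h₂ => simp only [mul_add, map_add, LinearMap.add_apply, h₁, h₂]

noncomputable def innerX (x : σ → R) : MvPolynomial σ R := ∑ a, C (x a) * X a

noncomputable def normSqX : MvPolynomial σ R := ∑ a, X a ^ 2

noncomputable def dirDeriv (x : σ → R) : Derivation R (MvPolynomial σ R) (MvPolynomial σ R) :=
  ∑ a, x a • pderiv a

noncomputable def laplacian : MvPolynomial σ R →ₗ[R] MvPolynomial σ R :=
  ∑ a, (pderiv a).toLinearMap ∘ₗ (pderiv a).toLinearMap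

lemma dirDeriv_apply (x : σ → R) (p : MvPolynomial σ R) :
    dirDeriv x p = ∑ a, x a • pderiv a p := by
  rw [dirDeriv, ← Derivation.coeFnAddMonoidHom_apply, map_sum, Finset.sum_apply]
  rfl

lemma laplacian_apply (p : MvPolynomial σ R) :
    laplacian p = ∑ a, pderiv a (pderiv a p) := by
  simp [laplacian]

lemma pderiv_innerX (x : σ → R) (a : σ) : pderiv a (innerX x) = C (x a) := by
  classical simp [innerX, Pi.single_apply]

lemma pderiv_normSqX (a : σ) : pderiv a (normSqX : MvPolynomial σ R) = 2 * X a := by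
  classical simp [normSqX, Pi.single_apply]

lemma dirDeriv_innerX (x y : σ → R) : dirDeriv x (innerX y) = C (∑ a, x a * y a) := by
  simp [dirDeriv_apply, pderiv_innerX, smul_eq_C_mul]

lemma dirDeriv_normSqX (x : σ → R) : dirDeriv x normSqX = (2 : R) • innerX x := by
  simp only [dirDeriv_apply, pderiv_normSqX, innerX, smul_sum, smul_eq_C_mul, map_ofNat]
  exact sum_congr rfl fun _ _ => by ring

lemma isHomogeneous_innerX (x : σ → R) : (innerX x).IsHomogeneous 1 :=
  IsHomogeneous.sum _ _ _ fun a _ => isHomogeneous_C_mul_X _ a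

lemma isHomogeneous_normSqX : (normSqX : MvPolynomial σ R).IsHomogeneous 2 :=
  IsHomogeneous.sum _ _ _ fun a _ => isHomogeneous_X_pow a 2

lemma eval_innerX (x y : σ → R) : eval y (innerX x) = ∑ a, x a * y a := by
  simp [innerX]

lemma eval_normSqX (y : σ → R) : eval y (normSqX : MvPolynomial σ R) = ∑ a, y a ^ 2 := by
  simp [normSqX]

lemma fischer_innerX_mul (x : σ → R) (p q : MvPolynomial σ R) :
    fischer (innerX x * p) q = fischer p (dirDeriv x q) := by
  simp [innerX, Finset.sum_mul, ← smul_eq_C_mul, fischer_X_mul, dirDeriv_apply]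

lemma fischer_normSqX_mul (p q : MvPolynomial σ R) :
    fischer (normSqX * p) q = fischer p (laplacian q) := by
  simp [normSqX, Finset.sum_mul, sq, mul_assoc, fischer_X_mul, laplacian_apply]

lemma laplacian_innerX_mul (x : σ → R) (p : MvPolynomial σ R) :
    laplacian (innerX x * p) = innerX x * laplacian p + (2 : R) • dirDeriv x p := by
  have h (a : σ) : pderiv a (pderiv a (innerX x * p)) =
      innerX x * pderiv a (pderiv a p) + (2 : R) • (x a • pderiv a p) := by
    simp only [pderiv_mul, map_add, pderiv_innerX, pderiv_C, smul_eq_C_mul, map_ofNat]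
    ring
  simp only [laplacian_apply, dirDeriv_apply, h, sum_add_distrib, mul_sum, smul_sum]

lemma laplacian_normSqX_mul {p : MvPolynomial σ R} {k : ℕ} (hp : p.IsHomogeneous k) :
    laplacian (normSqX * p) = normSqX * laplacian p + (4 * k + 2 * Fintype.card σ : R) • p := by
  have h (a : σ) : pderiv a (pderiv a (normSqX * p)) =
      normSqX * pderiv a (pderiv a p) + (4 : R) • (X a * pderiv a p) + (2 : R) • p := by
    have h2 : pderiv a (2 : MvPolynomial σ R) = 0 := (pderiv a).map_natCast 2
    simp only [pderiv_mul, map_add, pderiv_normSqX, pderiv_X_self, h2, smul_eq_C_mul, map_ofNat]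
    ring
  simp only [laplacian_apply, h, sum_add_distrib, mul_sum, ← smul_sum, hp.sum_X_mul_pderiv,
    sum_const, card_univ, ← Nat.cast_smul_eq_nsmul R, smul_smul, add_smul, add_assoc]

lemma laplacian_dirDeriv (x : σ → R) (p : MvPolynomial σ R) :
    laplacian (dirDeriv x p) = dirDeriv x (laplacian p) := by
  simp only [laplacian_apply, dirDeriv_apply, map_sum, map_smul, smul_sum]
  rw [sum_comm]
  refine sum_congr rfl fun b _ => sum_congr rfl fun a _ => ?_
  rw [pderiv_pderiv_comm b a, pderiv_pderiv_comm a b (pderiv b p)]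

lemma IsHomogeneous.dirDeriv {q : MvPolynomial σ R} {k : ℕ} (hq : q.IsHomogeneous (k + 1))
    (x : σ → R) : (dirDeriv x q).IsHomogeneous k := by
  rw [dirDeriv_apply]
  exact IsHomogeneous.sum _ _ _ fun a _ => by
    rw [smul_eq_C_mul]; exact hq.pderiv.C_mul _

lemma eval_dirDeriv_self {q : MvPolynomial σ R} {k : ℕ} (hq : q.IsHomogeneous k) (x : σ → R) :
    eval x (dirDeriv x q) = k * eval x q := by
  have h := congr(eval x $(hq.sum_X_mul_pderiv))
  simp only [map_sum, map_mul, eval_X, nsmul_eq_mul] at h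
  simp [dirDeriv_apply, map_sum, smul_eval, h]

lemma fischer_innerX_mul_eq {p : MvPolynomial σ R} {x : σ → R} {κ : R} {k : ℕ}
    (hp : ∀ q : MvPolynomial σ R, q.IsHomogeneous k → laplacian q = 0 →
      fischer p q = κ * eval x q)
    {q : MvPolynomial σ R} (hq : q.IsHomogeneous (k + 1)) (hq' : laplacian q = 0) :
    fischer (innerX x * p) q = κ * (k + 1) * eval x q := by
  rw [fischer_innerX_mul, hp _ (hq.dirDeriv x) (by rw [laplacian_dirDeriv, hq', map_zero]),
    eval_dirDeriv_self hq]
  push_cast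
  ring

end MvPolynomial

open MvPolynomial

lemma sum_sum_le_sum_diag_of_nonpos {ι M : Type*} [DecidableEq ι] [AddCommMonoid M]
    [PartialOrder M] [IsOrderedAddMonoid M] (s : Finset ι) (g : ι → ι → M)
    (h : ∀ x ∈ s, ∀ y ∈ s, x ≠ y → g x y ≤ 0) :
    ∑ x ∈ s, ∑ y ∈ s, g x y ≤ ∑ x ∈ s, g x x :=
  sum_le_sum fun x hx => by
    rw [← add_sum_erase s _ hx]
    exact add_le_of_nonpos_right <| sum_nonpos fun y hy =>
      h x hx y (mem_of_mem_erase hy) (ne_of_mem_erase hy).symm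

lemma sum_sq_eq_one_of_norm_eq_one {ι : Type*} [Fintype ι] {x : EuclideanSpace ℝ ι}
    (hx : ‖x‖ = 1) : ∑ a, x a ^ 2 = 1 := by
  simpa [hx] using (EuclideanSpace.norm_sq_eq x).symm

section Gegenbauer

variable {n : ℕ}

lemma gegenbauer_denom_pos (hn : 2 ≤ n) (k : ℕ) : 0 < (k : ℝ) + 1 + n - 2 := by
  have : (2 : ℝ) ≤ n := by exact_mod_cast hn
  linarith [k.cast_nonneg (α := ℝ)]

/-- The zonal harmonic `y ↦ ‖y‖ᵏ P_k(⟨x, y⟩ / ‖y‖)`, obtained by homogenising the recurrence of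
`geg`. -/
noncomputable def zonalHarmonic (x : Fin n → ℝ) : ℕ → MvPolynomial (Fin n) ℝ
  | 0 => 1
  | 1 => innerX x
  | (k + 2) => ((k : ℝ) + 1 + n - 2)⁻¹ •
      ((2 * ((k : ℝ) + 1) + n - 2) • (innerX x * zonalHarmonic x (k + 1))
        - ((k : ℝ) + 1) • (normSqX * zonalHarmonic x k))

lemma zonalHarmonic_add_two (hn : 2 ≤ n) (x : Fin n → ℝ) (k : ℕ) :
    ((k : ℝ) + 1 + n - 2) • zonalHarmonic x (k + 2) =
      (2 * ((k : ℝ) + 1) + n - 2) • (innerX x * zonalHarmonic x (k + 1))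
        - ((k : ℝ) + 1) • (normSqX * zonalHarmonic x k) := by
  rw [zonalHarmonic, smul_inv_smul₀ (gegenbauer_denom_pos hn k).ne']

theorem isHomogeneous_zonalHarmonic (x : Fin n → ℝ) :
    ∀ k, (zonalHarmonic x k).IsHomogeneous k
  | 0 => isHomogeneous_one _ _
  | 1 => isHomogeneous_innerX x
  | k + 2 => by
    have h₁ := (isHomogeneous_innerX x).mul (isHomogeneous_zonalHarmonic x (k + 1))
    have h₂ := isHomogeneous_normSqX.mul (isHomogeneous_zonalHarmonic x k)
    rw [show 1 + (k + 1) = k + 2 by ring] at h₁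
    rw [show 2 + k = k + 2 by ring] at h₂
    simp only [zonalHarmonic, smul_eq_C_mul]
    exact ((h₁.C_mul _).sub (h₂.C_mul _)).C_mul _

lemma dirDeriv_innerX_self {x : Fin n → ℝ} (hx : ∑ a, x a ^ 2 = 1) :
    dirDeriv x (innerX x) = 1 := by
  simp [dirDeriv_innerX, ← sq, hx]

theorem dirDeriv_zonalHarmonic (hn : 2 ≤ n) {x : Fin n → ℝ} (hx : ∑ a, x a ^ 2 = 1) :
    ∀ k, dirDeriv x (zonalHarmonic x (k + 1)) = ((k : ℝ) + 1) • zonalHarmonic x k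
  | 0 => by simp [zonalHarmonic, dirDeriv_innerX_self hx]
  | k + 1 => by
    have hbracket : (2 * (k : ℝ) + n - 2) • (innerX x * zonalHarmonic x k)
        - normSqX * dirDeriv x (zonalHarmonic x k) =
          ((k : ℝ) + n - 2) • zonalHarmonic x (k + 1) := by
      cases k with
      | zero => simp [zonalHarmonic]
      | succ j =>
        rw [dirDeriv_zonalHarmonic hn hx j, mul_smul_comm]
        push_cast
        linear_combination (norm := module) -(zonalHarmonic_add_two hn x j)
    have h := congrArg (dirDeriv x) (zonalHarmonic_add_two hn x k)
    simp only [Derivation.map_smul, Derivation.map_sub, Derivation.leibniz, smul_eq_mul,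
      dirDeriv_zonalHarmonic hn hx k, dirDeriv_innerX_self hx, dirDeriv_normSqX, mul_one,
      mul_smul_comm, smul_mul_assoc, mul_comm (zonalHarmonic x k)] at h
    apply smul_right_injective _ (gegenbauer_denom_pos hn k).ne'
    dsimp only
    push_cast
    linear_combination (norm := module) h + ((k : ℝ) + 1) • hbracket

theorem laplacian_zonalHarmonic (hn : 2 ≤ n) {x : Fin n → ℝ} (hx : ∑ a, x a ^ 2 = 1) :
    ∀ k, laplacian (zonalHarmonic x k) = 0
  | 0 => by simp [zonalHarmonic, laplacian_apply]
  | 1 => by simp [zonalHarmonic, laplacian_apply, pderiv_innerX]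
  | k + 2 => by
    have h := congrArg laplacian (zonalHarmonic_add_two hn x k)
    simp only [map_smul, map_sub, laplacian_innerX_mul,
      laplacian_normSqX_mul (isHomogeneous_zonalHarmonic x k),
      laplacian_zonalHarmonic hn hx (k + 1), laplacian_zonalHarmonic hn hx k,
      dirDeriv_zonalHarmonic hn hx k, Fintype.card_fin, mul_zero, zero_add] at h
    apply smul_right_injective _ (gegenbauer_denom_pos hn k).ne'
    dsimp only
    rw [h]
    module

theorem eval_zonalHarmonic (x : Fin n → ℝ) {y : Fin n → ℝ} (hy : ∑ a, y a ^ 2 = 1) :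
    ∀ k, eval y (zonalHarmonic x k) = geg n k (∑ a, x a * y a)
  | 0 => by simp [zonalHarmonic, geg]
  | 1 => by simp [zonalHarmonic, geg, eval_innerX]
  | k + 2 => by
    rw [zonalHarmonic, geg, smul_eval, map_sub, smul_eval, smul_eval, map_mul, map_mul,
      eval_innerX, eval_normSqX, hy, eval_zonalHarmonic x hy k, eval_zonalHarmonic x hy (k + 1),
      div_eq_inv_mul]
    ring

theorem exists_fischer_zonalHarmonic_eq (hn : 2 ≤ n) :
    ∀ k, ∃ κ > 0, ∀ x : Fin n → ℝ, ∑ a, x a ^ 2 = 1 →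
      ∀ q : MvPolynomial (Fin n) ℝ, q.IsHomogeneous k → laplacian q = 0 →
        fischer (zonalHarmonic x k) q = κ * eval x q
  | 0 => ⟨1, one_pos, fun x _ q hq _ => by
    rw [← totalDegree_zero_iff_isHomogeneous, totalDegree_eq_zero_iff_eq_C] at hq
    rw [zonalHarmonic, fischer_one_left, hq]
    simp⟩
  | 1 => by
    obtain ⟨κ, hκ, h⟩ := exists_fischer_zonalHarmonic_eq hn 0
    refine ⟨κ, hκ, fun x hx q hq hq' => ?_⟩
    rw [show zonalHarmonic x 1 = innerX x * zonalHarmonic x 0 by simp [zonalHarmonic],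
      fischer_innerX_mul_eq (h x hx) hq hq']
    simp
  | k + 2 => by
    obtain ⟨κ, hκ, h⟩ := exists_fischer_zonalHarmonic_eq hn (k + 1)
    have hc := gegenbauer_denom_pos hn k
    refine ⟨(2 * ((k : ℝ) + 1) + n - 2) / ((k : ℝ) + 1 + n - 2) * (κ * (k + 2)),
      mul_pos (div_pos (by linarith) hc) (by positivity), fun x hx q hq hq' => ?_⟩
    have hrec := congrArg (fischer · q) (zonalHarmonic_add_two hn x k)
    simp only [LinearMap.map_smul₂, LinearMap.map_sub₂, fischer_normSqX_mul, hq', map_zero,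
      fischer_innerX_mul_eq (h x hx) hq hq', smul_eq_mul] at hrec
    field_simp
    push_cast at hrec
    linear_combination hrec

theorem sum_sum_geg_inner_nonneg (hn : 2 ≤ n) (k : ℕ)
    (C : Finset (EuclideanSpace ℝ (Fin n))) (hC : ∀ x ∈ C, ‖x‖ = 1) :
    0 ≤ ∑ x ∈ C, ∑ y ∈ C, geg n k ⟪x, y⟫ := by
  obtain ⟨κ, hκ, hrep⟩ := exists_fischer_zonalHarmonic_eq hn k
  have hsq (x) (hx : x ∈ C) : ∑ a, x a ^ 2 = 1 := sum_sq_eq_one_of_norm_eq_one (hC x hx)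
  set q := ∑ y ∈ C, zonalHarmonic y k
  have hq : q.IsHomogeneous k :=
    IsHomogeneous.sum _ _ _ fun y _ => isHomogeneous_zonalHarmonic y k
  have hq' : laplacian q = 0 :=
    (map_sum _ _ _).trans (sum_eq_zero fun y hy => laplacian_zonalHarmonic hn (hsq y hy) k)
  have hgram : fischer q q = κ * ∑ x ∈ C, eval x q := by
    rw [show fischer q q = fischer (∑ y ∈ C, zonalHarmonic y k) q from rfl, map_sum fischer,
      LinearMap.sum_apply, mul_sum]
    exact sum_congr rfl fun x hx => hrep x (hsq x hx) q hq hq'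
  have heval : ∑ x ∈ C, eval x q = ∑ x ∈ C, ∑ y ∈ C, geg n k ⟪x, y⟫ :=
    sum_congr rfl fun x hx => (map_sum _ _ _).trans <| sum_congr rfl fun y _ => by
      rw [eval_zonalHarmonic y (hsq x hx)]
      simp [PiLp.inner_apply]
  rw [← heval]
  exact le_of_mul_le_mul_left (by rw [mul_zero, ← hgram]; exact fischer_self_nonneg q) hκ

lemma geg_one (hn : 2 ≤ n) : ∀ k, geg n k 1 = 1
  | 0 => rfl
  | 1 => rfl
  | k + 2 => by
    rw [geg, geg_one hn k, geg_one hn (k + 1)]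
    field_simp [(gegenbauer_denom_pos hn k).ne']
    ring

lemma le_sum_sum_gegenbauer_expansion (hn : 2 ≤ n) (m : ℕ) {c : ℕ → ℝ}
    (hc : ∀ i, 1 ≤ i → i ≤ m → 0 ≤ c i) (C : Finset (EuclideanSpace ℝ (Fin n)))
    (hC : ∀ x ∈ C, ‖x‖ = 1) :
    c 0 * (C.card : ℝ) ^ 2 ≤ ∑ x ∈ C, ∑ y ∈ C, ∑ i ∈ range (m + 1), c i * geg n i ⟪x, y⟫ := calc
  c 0 * (C.card : ℝ) ^ 2 = c 0 * ∑ x ∈ C, ∑ y ∈ C, geg n 0 ⟪x, y⟫ := by simp [geg, sq]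
  _ ≤ ∑ i ∈ range (m + 1), c i * ∑ x ∈ C, ∑ y ∈ C, geg n i ⟪x, y⟫ := by
    rw [sum_range_succ']
    refine le_add_of_nonneg_left (sum_nonneg fun i hi => mul_nonneg ?_ ?_)
    · exact hc _ (Nat.le_add_left 1 i) (mem_range.mp hi)
    · exact sum_sum_geg_inner_nonneg hn _ C hC
  _ = ∑ x ∈ C, ∑ y ∈ C, ∑ i ∈ range (m + 1), c i * geg n i ⟪x, y⟫ := by
    simp only [mul_sum]
    rw [sum_comm]
    exact sum_congr rfl fun _ _ => sum_comm

end Gegenbauer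

theorem LP_bound_spherical_codes_general (n : ℕ) (hn : 2 ≤ n) (s : ℝ)
    (f : ℝ → ℝ) (m : ℕ) (c : ℕ → ℝ)
    (hf : ∀ t : ℝ, f t = ∑ i ∈ Finset.range (m + 1), c i * geg n i t)
    (hA1 : ∀ t ∈ Set.Icc (-1 : ℝ) s, f t ≤ 0)
    (hA2a : 0 < c 0) (hA2b : ∀ i : ℕ, 1 ≤ i → i ≤ m → 0 ≤ c i)
    (C : Finset (EuclideanSpace ℝ (Fin n)))
    (hsph : ∀ x ∈ C, ‖x‖ = 1)
    (hinner : ∀ x ∈ C, ∀ y ∈ C, x ≠ y → ⟪x, y⟫ ≤ s) :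
    (C.card : ℝ) ≤ f 1 / c 0 := by
  classical
  have hf1 : c 0 ≤ f 1 := by
    rw [hf, sum_range_succ']
    simp only [geg_one hn, mul_one]
    exact le_add_of_nonneg_left <| sum_nonneg fun i hi =>
      hA2b _ (Nat.le_add_left 1 i) (mem_range.mp hi)
  have hlower : c 0 * (C.card : ℝ) ^ 2 ≤ ∑ x ∈ C, ∑ y ∈ C, f ⟪x, y⟫ := by
    simpa only [hf] using le_sum_sum_gegenbauer_expansion hn m hA2b C hsph
  have hupper : ∑ x ∈ C, ∑ y ∈ C, f ⟪x, y⟫ ≤ (C.card : ℝ) * f 1 := calc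
    _ ≤ ∑ x ∈ C, f ⟪x, x⟫ := sum_sum_le_sum_diag_of_nonpos C _ fun x hx y hy hxy =>
      hA1 _ ⟨neg_one_le_real_inner_of_norm_eq_one (hsph x hx) (hsph y hy), hinner x hx y hy hxy⟩
    _ = (C.card : ℝ) * f 1 := by
      rw [sum_congr rfl fun x hx => by rw [real_inner_self_eq_norm_sq, hsph x hx, one_pow],
        sum_const, nsmul_eq_mul]
  rw [le_div_iff₀ hA2a]
  rcases (Nat.cast_nonneg (α := ℝ) C.card).eq_or_lt with hempty | hpos
  · rw [← hempty]
    linarith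
  · exact le_of_mul_le_mul_left (by nlinarith) hpos

theorem LP_bound_spherical_codes (n : ℕ) (hn : 2 ≤ n) (s : ℝ)
    (hs : s ∈ Set.Ico (-1 : ℝ) 1)
    (f : ℝ → ℝ) (m : ℕ) (c : ℕ → ℝ)
    (hf : ∀ t : ℝ, f t = ∑ i ∈ Finset.range (m + 1), c i * geg n i t)
    (hA1 : ∀ t ∈ Set.Icc (-1 : ℝ) s, f t ≤ 0)
    (hA2a : 0 < c 0) (hA2b : ∀ i : ℕ, 1 ≤ i → i ≤ m → 0 ≤ c i)
    (C : Finset (EuclideanSpace ℝ (Fin n)))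
    (hsph : ∀ x ∈ C, ‖x‖ = 1)
    (hinner : ∀ x ∈ C, ∀ y ∈ C, x ≠ y → ⟪x, y⟫ ≤ s) :
    (C.card : ℝ) ≤ f 1 / c 0 :=
  LP_bound_spherical_codes_general n hn s f m c hf hA1 hA2a hA2b C hsph hinner
end
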